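/- Let 0 ≤ γ2 ≤ γ1 ≤ π/2 with γ1 + γ2 ≤ π/2, and let x3 ∈ [-1,1]. Define u0 = cos γ1 cos γ2 + x3 sin γ1 sin γ2, u1 = x3² − (cos γ2 sin γ1 − x3 cos γ1 sin γ2)², u2 = (x3 cos γ1 cos γ2 + sin γ1 sin γ2) x3, u3 = sin²γ1 + x3² cos²γ1. Then u2 ≥ u1 and u2² − u1·u3 ≥ 0 and u0² − u1 ≥ 0. (With strict inequalities when 0 < γ1 < π/2 and |x3| < 1.) -/

import Mathlib

/-!
Write `p = cos (γ1 - γ2)` and `m = cos (γ1 + γ2)`, both in `[0, 1]`. As a polynomial in `x3`,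
`u2 - u1` is a quadratic with values `p (1 - p)` and `m (1 - m)` at `x3 = 1` and `x3 = -1` and
leading coefficient `-(cos γ2 (cos γ2 - cos γ1) + sin² γ1 sin² γ2) ≤ 0`, so it is nonnegative on
`[-1, 1]`. The other two quantities factor as
`u2² - u1 u3 = sin² γ1 (1 - x3²) (sin γ1 cos γ2 - cos γ1 sin γ2 x3)²` and
`u0² - u1 = (1 - x3²) cos² γ2`.
-/

open Real Set

noncomputable section

namespace GeometricMeasureRankTwo

def u0 (γ1 γ2 x : ℝ) : ℝ := cos γ1 * cos γ2 + x * sin γ1 * sin γ2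

def u1 (γ1 γ2 x : ℝ) : ℝ := x ^ 2 - (cos γ2 * sin γ1 - x * cos γ1 * sin γ2) ^ 2

def u2 (γ1 γ2 x : ℝ) : ℝ := (x * cos γ1 * cos γ2 + sin γ1 * sin γ2) * x

def u3 (γ1 x : ℝ) : ℝ := sin γ1 ^ 2 + x ^ 2 * cos γ1 ^ 2

theorem u2_sub_u1 (γ1 γ2 x : ℝ) :
    u2 γ1 γ2 x - u1 γ1 γ2 x =
      (1 + x) / 2 * (cos (γ1 - γ2) * (1 - cos (γ1 - γ2)))
        + (1 - x) / 2 * (cos (γ1 + γ2) * (1 - cos (γ1 + γ2)))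
        + (1 - x ^ 2) * (cos γ2 * (cos γ2 - cos γ1) + sin γ1 ^ 2 * sin γ2 ^ 2) := by
  rw [u1, u2, cos_sub, cos_add]
  linear_combination (cos γ2 ^ 2 + x ^ 2 * sin γ2 ^ 2) * sin_sq_add_cos_sq γ1
    + x ^ 2 * sin_sq_add_cos_sq γ2

theorem u2_sq_sub_u1_mul_u3 (γ1 γ2 x : ℝ) :
    u2 γ1 γ2 x ^ 2 - u1 γ1 γ2 x * u3 γ1 x =
      sin γ1 ^ 2 * (1 - x ^ 2) * (sin γ1 * cos γ2 - cos γ1 * sin γ2 * x) ^ 2 := by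
  rw [u1, u2, u3]
  linear_combination
      (-x ^ 4 + cos γ2 ^ 2 * x ^ 4 + sin γ2 ^ 2 * x ^ 4 + cos γ1 ^ 2 * sin γ2 ^ 2 * x ^ 4
        - 2 * sin γ1 * cos γ1 * sin γ2 * cos γ2 * x ^ 3 + sin γ1 ^ 2 * cos γ2 ^ 2 * x ^ 2)
        * sin_sq_add_cos_sq γ1
      + (x ^ 4 + sin γ1 ^ 2 * x ^ 2 - sin γ1 ^ 2 * x ^ 4) * sin_sq_add_cos_sq γ2

theorem u0_sq_sub_u1 (γ1 γ2 x : ℝ) :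
    u0 γ1 γ2 x ^ 2 - u1 γ1 γ2 x = (1 - x ^ 2) * cos γ2 ^ 2 := by
  rw [u0, u1]
  linear_combination (cos γ2 ^ 2 + sin γ2 ^ 2 * x ^ 2) * sin_sq_add_cos_sq γ1
    + x ^ 2 * sin_sq_add_cos_sq γ2

theorem cos_mul_one_sub_cos_nonneg {θ : ℝ} (hθ : θ ∈ Icc (-(π / 2)) (π / 2)) :
    0 ≤ cos θ * (1 - cos θ) :=
  mul_nonneg (cos_nonneg_of_mem_Icc hθ) (sub_nonneg.2 (cos_le_one θ))

theorem cos_mul_cos_sub_cos_add_sin_sq_mul_sin_sq_nonneg {γ1 γ2 : ℝ} (h1 : 0 ≤ γ2)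
    (h2 : γ2 ≤ γ1) (h3 : γ1 ≤ π / 2) :
    0 ≤ cos γ2 * (cos γ2 - cos γ1) + sin γ1 ^ 2 * sin γ2 ^ 2 := by
  have hc2 : 0 ≤ cos γ2 := cos_nonneg_of_mem_Icc ⟨by linarith [pi_pos], by linarith⟩
  have hcc : cos γ1 ≤ cos γ2 := cos_le_cos_of_nonneg_of_le_pi h1 (by linarith [pi_pos]) h2
  have := mul_nonneg hc2 (sub_nonneg.2 hcc)
  positivity

theorem cos_mul_cos_sub_cos_add_sin_sq_mul_sin_sq_pos {γ1 γ2 : ℝ} (h1 : 0 ≤ γ2)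
    (h2 : γ2 ≤ γ1) (hγ1 : 0 < γ1) (h3 : γ1 < π / 2) :
    0 < cos γ2 * (cos γ2 - cos γ1) + sin γ1 ^ 2 * sin γ2 ^ 2 := by
  have hc2 : 0 < cos γ2 := cos_pos_of_mem_Ioo ⟨by linarith [pi_pos], by linarith⟩
  rcases h2.lt_or_eq with hlt | rfl
  · have hcc : cos γ1 < cos γ2 := cos_lt_cos_of_nonneg_of_le_pi h1 (by linarith [pi_pos]) hlt
    have := mul_pos hc2 (sub_pos.2 hcc)
    positivity
  · have hs : 0 < sin γ2 := sin_pos_of_pos_of_lt_pi hγ1 (by linarith [pi_pos])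
    rw [sub_self, mul_zero, zero_add]
    positivity

theorem sin_mul_cos_sub_cos_mul_sin_mul_pos {γ1 γ2 x : ℝ} (h1 : 0 ≤ γ2) (h2 : γ2 ≤ γ1)
    (hsum : γ1 + γ2 < π) (hγ1 : 0 < γ1) (hx : |x| < 1) :
    0 < sin γ1 * cos γ2 - cos γ1 * sin γ2 * x := by
  obtain ⟨hx1, hx2⟩ := abs_lt.1 hx
  have hsub : 0 ≤ sin (γ1 - γ2) := sin_nonneg_of_nonneg_of_le_pi (by linarith) (by linarith)
  have hadd : 0 < sin (γ1 + γ2) := sin_pos_of_pos_of_lt_pi (by linarith) hsum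
  have e : sin γ1 * cos γ2 - cos γ1 * sin γ2 * x =
      (1 + x) / 2 * sin (γ1 - γ2) + (1 - x) / 2 * sin (γ1 + γ2) := by
    rw [sin_sub, sin_add]
    ring
  rw [e]
  exact add_pos_of_nonneg_of_pos (mul_nonneg (by linarith) hsub) (mul_pos (by linarith) hadd)

theorem one_sub_sq_nonneg_of_mem_Icc {x : ℝ} (hx : x ∈ Icc (-1) 1) : 0 ≤ 1 - x ^ 2 :=
  sub_nonneg.2 ((sq_le_one_iff_abs_le_one x).2 (abs_le.2 hx))

theorem one_sub_sq_pos_of_abs_lt_one {x : ℝ} (hx : |x| < 1) : 0 < 1 - x ^ 2 :=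
  sub_pos.2 ((sq_lt_one_iff_abs_lt_one x).2 hx)

section

variable {γ1 γ2 x : ℝ}

theorem u1_le_u2 (h1 : 0 ≤ γ2) (h2 : γ2 ≤ γ1) (h4 : γ1 + γ2 ≤ π / 2)
    (hx : x ∈ Icc (-1) 1) : u1 γ1 γ2 x ≤ u2 γ1 γ2 x := by
  rw [← sub_nonneg, u2_sub_u1]
  have hp := cos_mul_one_sub_cos_nonneg (θ := γ1 - γ2) ⟨by linarith [pi_pos], by linarith⟩
  have hm := cos_mul_one_sub_cos_nonneg (θ := γ1 + γ2) ⟨by linarith [pi_pos], h4⟩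
  have hA := cos_mul_cos_sub_cos_add_sin_sq_mul_sin_sq_nonneg h1 h2 (by linarith)
  have hx2 := one_sub_sq_nonneg_of_mem_Icc hx
  obtain ⟨hx1, hx1'⟩ := hx
  exact add_nonneg (add_nonneg (mul_nonneg (by linarith) hp) (mul_nonneg (by linarith) hm))
    (mul_nonneg hx2 hA)

theorem u1_lt_u2 (h1 : 0 ≤ γ2) (h2 : γ2 ≤ γ1) (h4 : γ1 + γ2 ≤ π / 2) (hγ1 : 0 < γ1)
    (h3 : γ1 < π / 2) (hx : |x| < 1) : u1 γ1 γ2 x < u2 γ1 γ2 x := by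
  rw [← sub_pos, u2_sub_u1]
  have hp := cos_mul_one_sub_cos_nonneg (θ := γ1 - γ2) ⟨by linarith [pi_pos], by linarith⟩
  have hm := cos_mul_one_sub_cos_nonneg (θ := γ1 + γ2) ⟨by linarith [pi_pos], h4⟩
  have hA := cos_mul_cos_sub_cos_add_sin_sq_mul_sin_sq_pos h1 h2 hγ1 h3
  have hx2 := one_sub_sq_pos_of_abs_lt_one hx
  obtain ⟨hx1, hx1'⟩ := abs_lt.1 hx
  exact add_pos_of_nonneg_of_pos
    (add_nonneg (mul_nonneg (by linarith) hp) (mul_nonneg (by linarith) hm)) (mul_pos hx2 hA)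

theorem u2_sq_sub_u1_mul_u3_nonneg (hx : x ∈ Icc (-1) 1) :
    0 ≤ u2 γ1 γ2 x ^ 2 - u1 γ1 γ2 x * u3 γ1 x := by
  have := one_sub_sq_nonneg_of_mem_Icc hx
  rw [u2_sq_sub_u1_mul_u3]
  positivity

theorem u2_sq_sub_u1_mul_u3_pos (h1 : 0 ≤ γ2) (h2 : γ2 ≤ γ1) (hsum : γ1 + γ2 < π)
    (hγ1 : 0 < γ1) (hx : |x| < 1) :
    0 < u2 γ1 γ2 x ^ 2 - u1 γ1 γ2 x * u3 γ1 x := by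
  have hs := sin_pos_of_pos_of_lt_pi hγ1 (by linarith)
  have hx2 := one_sub_sq_pos_of_abs_lt_one hx
  have hk := sin_mul_cos_sub_cos_mul_sin_mul_pos h1 h2 hsum hγ1 hx
  rw [u2_sq_sub_u1_mul_u3]
  positivity

theorem u0_sq_sub_u1_nonneg (hx : x ∈ Icc (-1) 1) : 0 ≤ u0 γ1 γ2 x ^ 2 - u1 γ1 γ2 x := by
  have := one_sub_sq_nonneg_of_mem_Icc hx
  rw [u0_sq_sub_u1]
  positivity

theorem u0_sq_sub_u1_pos (hγ2 : γ2 ∈ Ioo (-(π / 2)) (π / 2)) (hx : |x| < 1) :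
    0 < u0 γ1 γ2 x ^ 2 - u1 γ1 γ2 x := by
  have := one_sub_sq_pos_of_abs_lt_one hx
  have := cos_pos_of_mem_Ioo hγ2
  rw [u0_sq_sub_u1]
  positivity

end

end GeometricMeasureRankTwo

end

open GeometricMeasureRankTwo

theorem stmt1 (γ1 γ2 x3 : ℝ)
    (h1 : 0 ≤ γ2) (h2 : γ2 ≤ γ1) (h4 : γ1 + γ2 ≤ π/2)
    (hx : x3 ∈ Set.Icc (-1:ℝ) 1) :
    let u0 := Real.cos γ1 * Real.cos γ2 + x3 * Real.sin γ1 * Real.sin γ2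
    let u1 := x3^2 - (Real.cos γ2 * Real.sin γ1 - x3 * Real.cos γ1 * Real.sin γ2)^2
    let u2 := (x3 * Real.cos γ1 * Real.cos γ2 + Real.sin γ1 * Real.sin γ2) * x3
    let u3 := (Real.sin γ1)^2 + x3^2 * (Real.cos γ1)^2
    (u1 ≤ u2 ∧ 0 ≤ u2^2 - u1 * u3 ∧ 0 ≤ u0^2 - u1) ∧
      (0 < γ1 → γ1 < π/2 → |x3| < 1 →
        u1 < u2 ∧ 0 < u2^2 - u1 * u3 ∧ 0 < u0^2 - u1) := by
  intro u0 u1 u2 u3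
  refine ⟨⟨u1_le_u2 h1 h2 h4 hx, u2_sq_sub_u1_mul_u3_nonneg hx, u0_sq_sub_u1_nonneg hx⟩,
    fun hγ1 h3 hx' => ⟨u1_lt_u2 h1 h2 h4 hγ1 h3 hx', ?_, ?_⟩⟩
  · exact u2_sq_sub_u1_mul_u3_pos h1 h2 (by linarith [pi_pos]) hγ1 hx'
  · exact u0_sq_sub_u1_pos ⟨by linarith [pi_pos], by linarith⟩ hx'
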